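/- Soundness of the Case code-transformation rule for unitary branches: let (M_m)_{m ∈ ι} be a finite family of n×n complex matrices (measurement operators) and (σ_m)_{m ∈ ι} a finite family of Hermitian involutory n×n complex matrices (σ_mᴴ = σ_m, σ_m·σ_m = 1ₙ). Then for every n×n complex matrices O and ρ and every θ ∈ ℝ: deriv (fun t : ℝ => Σ_{m ∈ ι} trace(O · R_{σ_m}(t) · M_m · ρ · M_mᴴ · (R_{σ_m}(t))ᴴ)) θ = Σ_{m ∈ ι} trace((Z_A ⊗ O) · R′_{σ_m}(θ) · (e00 ⊗ (M_m · ρ · M_mᴴ)) · (R′_{σ_m}(θ))ᴴ). -/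

import Mathlib

/-!
As `R_σ(t + π) = -sin(t/2) • 1 - (i cos(t/2)) • σ`, we have `d/dt R_σ(t) = ½ R_σ(t + π)`,
and the product rule gives the derivative of `tr(O R_σ(t) ρ R_σ(t)ᴴ)` as
`½ (tr(O R_σ(t+π) ρ R_σ(t)ᴴ) + tr(O R_σ(t) ρ R_σ(t+π)ᴴ))`.
Conjugating by `H ⊗ 1` turns the controlled rotation into `½ (J ⊗ R_σ(θ) + K ⊗ R_σ(θ+π))` with
`J = [[1,1],[1,1]]` and `K = [[1,-1],[-1,1]]`; with the ancilla in `|0⟩`, the `Z_A` expectation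
kills the `J/J` and `K/K` terms and keeps exactly these two cross terms.
-/

open Matrix Kronecker Complex

/-- The parameterized rotation gate `R_σ(θ) = cos(θ/2) • 1 − (i·sin(θ/2)) • σ`. -/
noncomputable def Rgate {n : ℕ} (σ : Matrix (Fin n) (Fin n) ℂ) (θ : ℝ) :
    Matrix (Fin n) (Fin n) ℂ :=
  (Real.cos (θ / 2) : ℂ) • (1 : Matrix (Fin n) (Fin n) ℂ)
    - (Complex.I * (Real.sin (θ / 2) : ℂ)) • σ

/-- `|0⟩⟨0|`. -/
def e00 : Matrix (Fin 2) (Fin 2) ℂ := !![1, 0; 0, 0]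

/-- `|1⟩⟨1|`. -/
def e11 : Matrix (Fin 2) (Fin 2) ℂ := !![0, 0; 0, 1]

/-- The Hadamard matrix. -/
noncomputable def Hmat : Matrix (Fin 2) (Fin 2) ℂ :=
  ((1 / Real.sqrt 2 : ℝ) : ℂ) • !![1, 1; 1, -1]

/-- The Pauli-Z ancilla observable. -/
def ZA : Matrix (Fin 2) (Fin 2) ℂ := !![1, 0; 0, -1]

/-- The controlled rotation `C_Rσ(θ) = |0⟩⟨0| ⊗ R_σ(θ) + |1⟩⟨1| ⊗ R_σ(θ+π)`. -/
noncomputable def CR {n : ℕ} (σ : Matrix (Fin n) (Fin n) ℂ) (θ : ℝ) :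
    Matrix (Fin 2 × Fin n) (Fin 2 × Fin n) ℂ :=
  e00 ⊗ₖ Rgate σ θ + e11 ⊗ₖ Rgate σ (θ + Real.pi)

/-- The differentiation gadget `R′_σ(θ) = (H ⊗ 1) C_Rσ(θ) (H ⊗ 1)`. -/
noncomputable def Rgadget {n : ℕ} (σ : Matrix (Fin n) (Fin n) ℂ) (θ : ℝ) :
    Matrix (Fin 2 × Fin n) (Fin 2 × Fin n) ℂ :=
  (Hmat ⊗ₖ (1 : Matrix (Fin n) (Fin n) ℂ)) * CR σ θ
    * (Hmat ⊗ₖ (1 : Matrix (Fin n) (Fin n) ℂ))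

section
open scoped Matrix.Norms.Frobenius

theorem HasDerivAt.trace_mul_mul_mul_conjTranspose {m : Type*} [Fintype m] [DecidableEq m]
    {U : ℝ → Matrix m m ℂ} {U' : Matrix m m ℂ} {t : ℝ} (hU : HasDerivAt U U' t)
    (O ρ : Matrix m m ℂ) :
    HasDerivAt (fun s => (O * U s * ρ * (U s)ᴴ).trace)
      ((O * U' * ρ * (U t)ᴴ).trace + (O * U t * ρ * U'ᴴ).trace) t := by
  have hprod : HasDerivAt (fun s => O * U s * ρ * (U s)ᴴ)
      (O * U' * ρ * (U t)ᴴ + O * U t * ρ * U'ᴴ) t :=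
    ((hU.const_mul O).mul_const ρ).mul hU.star
  rw [← Matrix.trace_add]
  exact (Matrix.traceLinearMap m ℝ ℂ).toContinuousLinearMap.hasFDerivAt.comp_hasDerivAt t hprod

theorem hasDerivAt_Rgate {n : ℕ} (σ : Matrix (Fin n) (Fin n) ℂ) (t : ℝ) :
    HasDerivAt (Rgate σ) ((1 / 2 : ℂ) • Rgate σ (t + Real.pi)) t := by
  have hhalf := (hasDerivAt_id t).div_const 2
  have hcos := ((Real.hasDerivAt_cos (t / 2)).comp t hhalf).ofReal_comp
  have hsin := ((Real.hasDerivAt_sin (t / 2)).comp t hhalf).ofReal_comp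
  refine ((hcos.smul_const (1 : Matrix (Fin n) (Fin n) ℂ)).sub
    ((hsin.const_mul Complex.I).smul_const σ)).congr_deriv ?_
  rw [Rgate, add_div, Real.cos_add_pi_div_two, Real.sin_add_pi_div_two, smul_sub, smul_smul,
    smul_smul]
  push_cast
  congr 2 <;> ring

end

theorem Hmat_mul_mul_Hmat (X : Matrix (Fin 2) (Fin 2) ℂ) :
    Hmat * X * Hmat = (1 / 2 : ℂ) • (!![1, 1; 1, -1] * X * !![1, 1; 1, -1]) := by
  have hsq : ((1 / Real.sqrt 2 : ℝ) : ℂ) * ((1 / Real.sqrt 2 : ℝ) : ℂ) = 1 / 2 := by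
    rw [← Complex.ofReal_mul, div_mul_div_comm, one_mul, Real.mul_self_sqrt zero_le_two]
    norm_num
  rw [Hmat, Matrix.smul_mul, Matrix.smul_mul, Matrix.mul_smul, smul_smul, hsq]

theorem Hmat_mul_e00_mul_Hmat : Hmat * e00 * Hmat = (1 / 2 : ℂ) • !![1, 1; 1, 1] := by
  rw [Hmat_mul_mul_Hmat]
  norm_num [e00, Matrix.mul_fin_two]

theorem Hmat_mul_e11_mul_Hmat : Hmat * e11 * Hmat = (1 / 2 : ℂ) • !![1, -1; -1, 1] := by
  rw [Hmat_mul_mul_Hmat]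
  norm_num [e11, Matrix.mul_fin_two]

section

variable {m : Type*} [Fintype m]

theorem Hmat_kronecker_one_conj [DecidableEq m] (A B : Matrix m m ℂ) :
    (Hmat ⊗ₖ (1 : Matrix m m ℂ)) * (e00 ⊗ₖ A + e11 ⊗ₖ B) * (Hmat ⊗ₖ 1)
      = ((1 / 2 : ℂ) • !![1, 1; 1, 1]) ⊗ₖ A + ((1 / 2 : ℂ) • !![1, -1; -1, 1]) ⊗ₖ B := by
  simp only [Matrix.mul_add, Matrix.add_mul, ← mul_kronecker_mul, Matrix.one_mul, Matrix.mul_one,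
    Hmat_mul_e00_mul_Hmat, Hmat_mul_e11_mul_Hmat]

theorem trace_ZA_kronecker_mul_e00_kronecker (O ρ A B : Matrix m m ℂ) :
    ((ZA ⊗ₖ O) * (((1 / 2 : ℂ) • !![1, 1; 1, 1]) ⊗ₖ A + ((1 / 2 : ℂ) • !![1, -1; -1, 1]) ⊗ₖ B)
        * (e00 ⊗ₖ ρ)
        * (((1 / 2 : ℂ) • !![1, 1; 1, 1]) ⊗ₖ A + ((1 / 2 : ℂ) • !![1, -1; -1, 1]) ⊗ₖ B)ᴴ).trace
      = (1 / 2 : ℂ) * ((O * A * ρ * Bᴴ).trace + (O * B * ρ * Aᴴ).trace) := by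
  have hJ : (!![1, 1; 1, 1] : Matrix (Fin 2) (Fin 2) ℂ)ᴴ = !![1, 1; 1, 1] := by
    ext i j; fin_cases i <;> fin_cases j <;> simp
  have hK : (!![1, -1; -1, 1] : Matrix (Fin 2) (Fin 2) ℂ)ᴴ = !![1, -1; -1, 1] := by
    ext i j; fin_cases i <;> fin_cases j <;> simp
  simp only [conjTranspose_add, smul_kronecker, conjTranspose_smul, conjTranspose_kronecker,
    Complex.star_def, map_div₀, map_one, map_ofNat, hJ, hK, Matrix.mul_add, Matrix.add_mul,
    Matrix.smul_mul, Matrix.mul_smul, trace_add, trace_smul, smul_eq_mul, ← mul_kronecker_mul]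
  norm_num [ZA, e00, Matrix.mul_fin_two, trace_kronecker, Matrix.trace_fin_two]
  ring

end

theorem trace_ZA_kronecker_mul_Rgadget {n : ℕ} (σ O ρ : Matrix (Fin n) (Fin n) ℂ) (θ : ℝ) :
    ((ZA ⊗ₖ O) * Rgadget σ θ * (e00 ⊗ₖ ρ) * (Rgadget σ θ)ᴴ).trace
      = (1 / 2 : ℂ) * ((O * Rgate σ θ * ρ * (Rgate σ (θ + Real.pi))ᴴ).trace
        + (O * Rgate σ (θ + Real.pi) * ρ * (Rgate σ θ)ᴴ).trace) := by
  rw [Rgadget, CR, Hmat_kronecker_one_conj, trace_ZA_kronecker_mul_e00_kronecker]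

theorem hasDerivAt_trace_mul_Rgate_mul_conjTranspose {n : ℕ} (σ O ρ : Matrix (Fin n) (Fin n) ℂ)
    (θ : ℝ) :
    HasDerivAt (fun t => (O * Rgate σ t * ρ * (Rgate σ t)ᴴ).trace)
      (((ZA ⊗ₖ O) * Rgadget σ θ * (e00 ⊗ₖ ρ) * (Rgadget σ θ)ᴴ).trace) θ := by
  refine ((hasDerivAt_Rgate σ θ).trace_mul_mul_mul_conjTranspose O ρ).congr_deriv ?_
  rw [trace_ZA_kronecker_mul_Rgadget]
  simp only [conjTranspose_smul, star_div₀, star_one, star_ofNat, Matrix.mul_smul,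
    Matrix.smul_mul, trace_smul, smul_eq_mul]
  ring

theorem case_rule_sound_general (n : ℕ) (ι : Type) [Fintype ι]
    (M : ι → Matrix (Fin n) (Fin n) ℂ)
    (σ : ι → Matrix (Fin n) (Fin n) ℂ)
    (O ρ : Matrix (Fin n) (Fin n) ℂ) (θ : ℝ) :
    deriv (fun t : ℝ =>
        ∑ m : ι, (O * Rgate (σ m) t * M m * ρ * (M m)ᴴ * (Rgate (σ m) t)ᴴ).trace) θ
      = ∑ m : ι, ((ZA ⊗ₖ O) * Rgadget (σ m) θ * (e00 ⊗ₖ (M m * ρ * (M m)ᴴ))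
          * (Rgadget (σ m) θ)ᴴ).trace := by
  have hbranch : ∀ m, HasDerivAt
      (fun t => (O * Rgate (σ m) t * M m * ρ * (M m)ᴴ * (Rgate (σ m) t)ᴴ).trace)
      (((ZA ⊗ₖ O) * Rgadget (σ m) θ * (e00 ⊗ₖ (M m * ρ * (M m)ᴴ)) * (Rgadget (σ m) θ)ᴴ).trace) θ :=
    fun m => by
      simpa only [Matrix.mul_assoc] using
        hasDerivAt_trace_mul_Rgate_mul_conjTranspose (σ m) O (M m * ρ * (M m)ᴴ) θ
  exact (HasDerivAt.fun_sum fun m _ => hbranch m).deriv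

/-- Soundness of the Case code-transformation rule for unitary branches. -/
theorem case_rule_sound (n : ℕ) (ι : Type) [Fintype ι]
    (M : ι → Matrix (Fin n) (Fin n) ℂ)
    (σ : ι → Matrix (Fin n) (Fin n) ℂ)
    (hσH : ∀ m, (σ m)ᴴ = σ m) (hσ2 : ∀ m, σ m * σ m = 1)
    (O ρ : Matrix (Fin n) (Fin n) ℂ) (θ : ℝ) :
    deriv (fun t : ℝ =>
        ∑ m : ι, (O * Rgate (σ m) t * M m * ρ * (M m)ᴴ * (Rgate (σ m) t)ᴴ).trace) θ
      = ∑ m : ι, ((ZA ⊗ₖ O) * Rgadget (σ m) θ * (e00 ⊗ₖ (M m * ρ * (M m)ᴴ))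
          * (Rgadget (σ m) θ)ᴴ).trace :=
  case_rule_sound_general n ι M σ O ρ θ
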